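/- arXiv:0711.2495 — 5 statements merged into one kernel-verified Lean document; each statement's English description precedes it below -/
import Mathlib

section
/- Let E be a barreled topological vector space in which every bounded set is precompact. Let (T_ε)_{ε∈(0,1]} be a family of continuous linear functionals on E such that for every u∈E and every m∈ℕ, |T_ε(u)| ≤ ε^m for all sufficiently small ε. If (u_ε)_{ε∈(0,1]} is an asymptotically bounded net in E, then for every m∈ℕ, |T_ε(u_ε)| ≤ ε^m for all sufficiently small ε. -/
/-!
If the conclusion failed for some `m`, there would be `ε_j → 0` with `‖T_{ε_j}(u_{ε_j})‖ > ε_j^m`.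
The rescaled functionals `ε_j^{-(m+1)} T_{ε_j}` are bounded at every point, so by Banach–Steinhaus
(`E` is barrelled) they are bounded by `1` on a whole neighbourhood `U` of `0`. Asymptotic
boundedness writes `u_{ε_j} = n w` with `w ∈ U`, whence `‖T_{ε_j}(u_{ε_j})‖ ≤ n ε_j^{m+1} ≤ ε_j^m`
for large `j`.
-/

open Filter Topology Set NNReal Pointwise

def IsNegligible {F : Type*} [Norm F] (f : ℝ → F) : Prop :=
  ∀ m : ℕ, ∀ᶠ ε in 𝓝[>] 0, ‖f ε‖ ≤ ε ^ m

-- The dilate `(n : 𝕜) • U`, not the Minkowski sum `n • U = U + ⋯ + U`.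
def IsAsymptoticallyBounded (𝕜 : Type*) {E : Type*} [Semiring 𝕜] [AddCommGroup E] [Module 𝕜 E]
    [TopologicalSpace E] (u : ℝ → E) : Prop :=
  ∀ U ∈ 𝓝 (0 : E), ∃ n : ℕ, ∀ᶠ ε in 𝓝[>] 0, u ε ∈ (n : 𝕜) • U

theorem eventually_nhdsGT_zero_iff_exists_forall_Ioc {P : ℝ → Prop} :
    (∀ᶠ ε in 𝓝[>] 0, P ε) ↔ ∃ ε₀ : ℝ, 0 < ε₀ ∧ ∀ ε ∈ Ioc (0 : ℝ) 1, ε ≤ ε₀ → P ε := by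
  rw [(nhdsGT_basis 0).eventually_iff]
  constructor
  · rintro ⟨b, hb, hP⟩
    exact ⟨b / 2, half_pos hb, fun ε hε hle ↦ hP ⟨hε.1, by linarith⟩⟩
  · rintro ⟨ε₀, hε₀, hP⟩
    exact ⟨min ε₀ 1, lt_min hε₀ one_pos, fun ε hε ↦
      hP ε ⟨hε.1, hε.2.le.trans (min_le_right _ _)⟩ (hε.2.le.trans (min_le_left _ _))⟩

section Barrelled

variable {𝕜 E F : Type*} [NormedField 𝕜] [AddCommGroup E] [Module 𝕜 E] [TopologicalSpace E]
  [SeminormedAddCommGroup F] [NormedSpace 𝕜 F]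

theorem exists_mem_nhds_zero_forall_mul_norm_lt_one {ι : Type*} [BarrelledSpace 𝕜 E]
    (S : ι → E →L[𝕜] F) (c : ι → ℝ≥0)
    (hS : ∀ x, BddAbove (range fun i ↦ c i * ‖S i x‖)) :
    ∃ U ∈ 𝓝 (0 : E), ∀ i, ∀ w ∈ U, c i * ‖S i w‖ < 1 := by
  let p : ι → Seminorm 𝕜 E := fun i ↦ c i • (normSeminorm 𝕜 F).comp (S i).toLinearMap
  have hp : ∀ i x, p i x = c i * ‖S i x‖ := fun _ _ ↦ rfl
  have hbdd : BddAbove (range p) :=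
    Seminorm.bddAbove_range_iff.2 fun x ↦ by simpa only [hp] using hS x
  have hcont : Continuous ⇑(⨆ i, p i : Seminorm 𝕜 E) := by
    rw [Seminorm.coe_iSup_eq hbdd]
    exact Seminorm.continuous_iSup p
      (fun i ↦ continuous_const.mul (continuous_norm.comp (S i).continuous)) hbdd
  refine ⟨{w | (⨆ i, p i : Seminorm 𝕜 E) w < 1},
    (isOpen_lt hcont continuous_const).mem_nhds (by simp), ?_⟩
  intro i w hw
  rw [← hp]
  refine lt_of_le_of_lt ?_ hw
  rw [Seminorm.coe_iSup_eq hbdd, iSup_apply]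
  exact le_ciSup (by simpa only [hp] using hS w) i

theorem norm_apply_le_pow_of_mem_natCast_smul {T : E →L[𝕜] F} {U : Set E} {n m : ℕ} {ε : ℝ}
    (hε : 0 ≤ ε) (hnε : n * ε ≤ 1) (hU : ∀ w ∈ U, ‖T w‖ ≤ ε ^ (m + 1)) {v : E}
    (hv : v ∈ (n : 𝕜) • U) :
    ‖T v‖ ≤ ε ^ m := by
  obtain ⟨w, hw, rfl⟩ := hv
  calc ‖T ((n : 𝕜) • w)‖ ≤ n * ‖T w‖ := by
        rw [Nat.cast_smul_eq_nsmul, map_nsmul]; exact norm_nsmul_le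
    _ ≤ n * ε ^ (m + 1) := by gcongr; exact hU w hw
    _ = (n * ε) * ε ^ m := by ring
    _ ≤ ε ^ m := mul_le_of_le_one_left (by positivity) hnε

theorem isNegligible_apply_of_isAsymptoticallyBounded [BarrelledSpace 𝕜 E] {T : ℝ → E →L[𝕜] F}
    (hT : ∀ v, IsNegligible fun ε ↦ T ε v) {u : ℝ → E} (hu : IsAsymptoticallyBounded 𝕜 u) :
    IsNegligible fun ε ↦ T ε (u ε) := by
  intro m
  by_contra hbad
  -- Banach–Steinhaus needs a bound at every point for the whole family: the bound from `hT` holds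
  -- only for small `ε`, which along a sequence leaves out finitely many indices.
  obtain ⟨e, he, hpos, hbad⟩ : ∃ e : ℕ → ℝ, Tendsto e atTop (𝓝[>] 0) ∧
      (∀ j, 0 < e j) ∧ ∀ j, ¬ ‖T (e j) (u (e j))‖ ≤ e j ^ m := by
    simpa only [forall_and, and_comm] using exists_seq_forall_of_frequently
      ((not_eventually.1 hbad).and_eventually self_mem_nhdsWithin)
  let c : ℕ → ℝ≥0 := fun j ↦ (e j ^ (m + 1))⁻¹.toNNReal
  have hc : ∀ j (x : ℝ), c j * x ≤ 1 ↔ x ≤ e j ^ (m + 1) := fun j x ↦ by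
    have hej : 0 < e j ^ (m + 1) := pow_pos (hpos j) _
    rw [Real.coe_toNNReal _ (inv_pos.2 hej).le, inv_mul_le_iff₀ hej, mul_one]
  have hbdd : ∀ v, BddAbove (range fun j ↦ c j * ‖T (e j) v‖) := fun v ↦
    IsBoundedUnder.bddAbove_range <| isBoundedUnder_of_eventually_le (a := 1) <|
      (he.eventually (hT v (m + 1))).mono fun j hj ↦ (hc j _).2 hj
  obtain ⟨U, hU, hTU⟩ := exists_mem_nhds_zero_forall_mul_norm_lt_one (fun j ↦ T (e j)) c hbdd
  obtain ⟨n, hn⟩ := hu U hU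
  have hsmall : ∀ᶠ ε in 𝓝[>] (0 : ℝ), (n : ℝ) * ε ≤ 1 := by
    refine nhdsWithin_le_nhds ?_
    exact ((continuous_const.mul continuous_id).tendsto' 0 0 (by simp)).eventually
      (ge_mem_nhds one_pos)
  obtain ⟨j, hjU, hjn⟩ := (he.eventually (hn.and hsmall)).exists
  exact hbad j <| norm_apply_le_pow_of_mem_natCast_smul (hpos j).le hjn
    (fun w hw ↦ (hc j _).1 (hTU j w hw).le) hjU

end Barrelled

theorem stmt2_general {E : Type*} [AddCommGroup E] [Module ℂ E] [UniformSpace E]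
    [BarrelledSpace ℂ E]
    (T : ℝ → (E →L[ℂ] ℂ))
    (hT : ∀ (v : E) (m : ℕ), ∃ ε₀ : ℝ, 0 < ε₀ ∧
      ∀ ε ∈ Set.Ioc (0:ℝ) 1, ε ≤ ε₀ → ‖T ε v‖ ≤ ε ^ m)
    (u : ℝ → E)
    (hu : ∀ U ∈ nhds (0:E), ∃ (n : ℕ) (ε₀ : ℝ), 0 < ε₀ ∧
      ∀ ε ∈ Set.Ioc (0:ℝ) 1, ε ≤ ε₀ → u ε ∈ (n : ℝ) • U) :
    ∀ m : ℕ, ∃ ε₀ : ℝ, 0 < ε₀ ∧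
      ∀ ε ∈ Set.Ioc (0:ℝ) 1, ε ≤ ε₀ → ‖T ε (u ε)‖ ≤ ε ^ m := by
  have hT' : ∀ v, IsNegligible fun ε ↦ T ε v := fun v m ↦
    eventually_nhdsGT_zero_iff_exists_forall_Ioc.2 (hT v m)
  have hu' : IsAsymptoticallyBounded ℂ u := fun U hU ↦ by
    obtain ⟨n, ε₀, hε₀, hn⟩ := hu U hU
    refine ⟨n, eventually_nhdsGT_zero_iff_exists_forall_Ioc.2 ⟨ε₀, hε₀, ?_⟩⟩
    simpa only [mem_smul_set, Nat.cast_smul_eq_nsmul] using hn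
  exact fun m ↦ eventually_nhdsGT_zero_iff_exists_forall_Ioc.1
    (isNegligible_apply_of_isAsymptoticallyBounded hT' hu' m)

/-- If `E` is barreled with every bounded set precompact, `(T_ε)` is a negligible net of
continuous linear functionals (pointwise), and `(u_ε)` is asymptotically bounded, then
`(T_ε(u_ε))` is negligible. -/
theorem stmt2 {E : Type*} [AddCommGroup E] [Module ℂ E] [UniformSpace E]
    [IsUniformAddGroup E] [ContinuousSMul ℂ E] [BarrelledSpace ℂ E]
    (hcpt : ∀ S : Set E, Bornology.IsVonNBounded ℂ S → TotallyBounded S)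
    (T : ℝ → (E →L[ℂ] ℂ))
    (hT : ∀ (v : E) (m : ℕ), ∃ ε₀ : ℝ, 0 < ε₀ ∧
      ∀ ε ∈ Set.Ioc (0:ℝ) 1, ε ≤ ε₀ → ‖T ε v‖ ≤ ε ^ m)
    (u : ℝ → E)
    (hu : ∀ U ∈ nhds (0:E), ∃ (n : ℕ) (ε₀ : ℝ), 0 < ε₀ ∧
      ∀ ε ∈ Set.Ioc (0:ℝ) 1, ε ≤ ε₀ → u ε ∈ (n : ℝ) • U) :
    ∀ m : ℕ, ∃ ε₀ : ℝ, 0 < ε₀ ∧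
      ∀ ε ∈ Set.Ioc (0:ℝ) 1, ε ≤ ε₀ → ‖T ε (u ε)‖ ≤ ε ^ m :=
  stmt2_general T hT u hu
end

section
/- Let E be the strict inductive limit of an increasing sequence of Fréchet spaces (E_n), with each E_n a closed topological subspace of E_{n+1}. If (u_ε)_{ε∈(0,1]} ∈ E^{(0,1]} satisfies: for every convex neighbourhood U of 0 in E there is N∈ℕ with u_ε ∈ ε^{-N} U for small ε (moderateness), then there exist m∈ℕ and ε₀∈(0,1] such that u_ε ∈ E_m for all ε ≤ ε₀. -/
/-!
If no `F m` eventually contains `u ε`, pick `e k → 0` with `u (e k) ∉ F k` and, by Hahn–Banach,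
continuous functionals `g k` vanishing on `F k` with `g k (u (e k)) = 1`. The convex set
`U = {x | ∀ k, |g k x| ≤ e k ^ k}` is a neighbourhood of `0`: on `F n` only `g 0, …, g (n - 1)`
impose a condition. Moderateness would put `u (e k)` in `e k ^ (-N) • U` for large `k`, i.e.
`e k ^ N ≤ e k ^ k`, which fails as soon as `k > N`.
-/

open Pointwise Filter Topology Metric Set

section

variable {E : Type*} [AddCommGroup E] [Module ℝ E] [TopologicalSpace E]

theorem Submodule.exists_dual_eq_zero_and_eq_one_of_notMem [IsTopologicalAddGroup E]
    [ContinuousSMul ℝ E] [LocallyConvexSpace ℝ E] {S : Submodule ℝ E}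
    (hS : IsClosed (S : Set E)) {x : E} (hx : x ∉ S) :
    ∃ g : StrongDual ℝ E, (∀ y ∈ S, g y = 0) ∧ g x = 1 := by
  obtain ⟨f, t, hfS, htx⟩ := geometric_hahn_banach_closed_point S.convex hS hx
  -- a functional bounded above on a subspace vanishes there: otherwise rescale `y` to `f = t`
  have hf_vanish : ∀ y ∈ S, f y = 0 := fun y hy => by
    by_contra hne
    simpa [div_mul_cancel₀ t hne] using hfS ((t / f y) • y) (S.smul_mem _ hy)
  have hfx : 0 < f x := by simpa using (hfS 0 S.zero_mem).trans htx
  exact ⟨(f x)⁻¹ • f, fun y hy => by simp [hf_vanish y hy], by simp [hfx.ne']⟩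

theorem preimage_iInter_closedBall_mem_nhds_zero {F : ℕ → Submodule ℝ E} (hmono : Monotone F)
    {g : ℕ → StrongDual ℝ E} (hg : ∀ k, ∀ y ∈ F k, g k y = 0) {r : ℕ → ℝ}
    (hr : ∀ k, 0 < r k) (n : ℕ) :
    ((↑) ⁻¹' ⋂ k, g k ⁻¹' closedBall 0 (r k) : Set (F n)) ∈ 𝓝 0 := by
  have hfirst : (⋂ k ∈ {k | k < n}, ((↑) : F n → E) ⁻¹' (g k ⁻¹' closedBall 0 (r k))) ∈ 𝓝 0 :=
    (biInter_mem (finite_lt_nat n)).2 fun k _ =>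
      ((g k).continuous.comp continuous_subtype_val).continuousAt.preimage_mem_nhds
        (t := closedBall 0 (r k)) (by simpa using closedBall_mem_nhds 0 (hr k))
  refine mem_of_superset hfirst fun v hv => mem_iInter.2 fun k => ?_
  rcases lt_or_ge k n with hk | hk
  · exact mem_iInter₂.1 hv k hk
  · simp [hg k v (hmono hk v.2), (hr k).le]

theorem pow_mul_abs_le_of_mem_zpow_neg_smul_iInter_closedBall {g : ℕ → StrongDual ℝ E}
    {r : ℕ → ℝ} {ε : ℝ} (hε : 0 < ε) {N : ℕ} {x : E}
    (hx : x ∈ ε ^ (-(N : ℤ)) • ⋂ k, g k ⁻¹' closedBall 0 (r k)) (k : ℕ) :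
    ε ^ N * |g k x| ≤ r k := by
  rw [mem_smul_set_iff_inv_smul_mem₀ (zpow_ne_zero _ hε.ne'), zpow_neg, inv_inv,
    zpow_natCast] at hx
  simpa [abs_mul, abs_of_pos hε] using mem_iInter.1 hx k

end

theorem stmt3_general {E : Type*} [AddCommGroup E] [Module ℝ E] [UniformSpace E]
    [IsUniformAddGroup E] [ContinuousSMul ℝ E] [LocallyConvexSpace ℝ E]
    (F : ℕ → Submodule ℝ E) (hmono : Monotone F)
    (hclosed : ∀ n, IsClosed (F n : Set E))
    -- characterization of the inductive limit topology on convex sets: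
    (hind : ∀ U : Set E, Convex ℝ U → (0:E) ∈ U →
      (U ∈ nhds (0:E) ↔ ∀ n, ((↑) ⁻¹' U : Set (F n)) ∈ nhds (0 : F n)))
    (u : ℝ → E)
    (hmod : ∀ U : Set E, Convex ℝ U → U ∈ nhds (0:E) → ∃ (N : ℕ) (ε₀ : ℝ), 0 < ε₀ ∧
      ∀ ε ∈ Set.Ioc (0:ℝ) 1, ε ≤ ε₀ → u ε ∈ (ε ^ (-(N:ℤ))) • U) :
    ∃ (m : ℕ) (ε₀ : ℝ), 0 < ε₀ ∧ ∀ ε ∈ Set.Ioc (0:ℝ) 1, ε ≤ ε₀ → u ε ∈ F m := by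
  by_contra! h
  choose e he hle hnot using fun k : ℕ => h k (1 / (k + 1)) Nat.one_div_pos_of_nat
  have he_lim : Tendsto e atTop (𝓝 0) :=
    tendsto_of_tendsto_of_tendsto_of_le_of_le tendsto_const_nhds
      tendsto_one_div_add_atTop_nhds_zero_nat (fun k => (he k).1.le) hle
  choose g hgF hgu using fun k => Submodule.exists_dual_eq_zero_and_eq_one_of_notMem
    (hclosed k) (hnot k)
  set U : Set E := ⋂ k, g k ⁻¹' closedBall 0 (e k ^ k)
  have hU_convex : Convex ℝ U :=
    convex_iInter fun k => (convex_closedBall 0 _).linear_preimage (g k).toLinearMap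
  have hU_nhds : U ∈ 𝓝 0 :=
    (hind U hU_convex (by simp [U, fun k => (pow_pos (he k).1 k).le])).2
      (preimage_iInter_closedBall_mem_nhds_zero hmono hgF fun k => pow_pos (he k).1 k)
  obtain ⟨N, ε₀, hε₀, hmem⟩ := hmod U hU_convex hU_nhds
  obtain ⟨k, hkε₀, hk1, hNk⟩ := ((he_lim.eventually (eventually_le_nhds hε₀)).and
    ((he_lim.eventually (eventually_lt_nhds one_pos)).and (eventually_gt_atTop N))).exists
  have hbound := pow_mul_abs_le_of_mem_zpow_neg_smul_iInter_closedBall (he k).1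
    (hmem (e k) (he k) hkε₀) k
  rw [hgu, abs_one, mul_one] at hbound
  exact (pow_lt_pow_right_of_lt_one₀ (he k).1 hk1 hNk).not_ge hbound

/-- In a strict inductive limit `E = ⋃ₙ Eₙ` of Fréchet spaces, any moderate net
`(u_ε)` eventually lies in a single `E_m`. -/
theorem stmt3 {E : Type*} [AddCommGroup E] [Module ℝ E] [UniformSpace E]
    [IsUniformAddGroup E] [ContinuousSMul ℝ E] [LocallyConvexSpace ℝ E]
    (F : ℕ → Submodule ℝ E) (hmono : Monotone F)
    (hunion : ∀ x : E, ∃ n, x ∈ F n)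
    (hclosed : ∀ n, IsClosed (F n : Set E))
    -- each `F n` (with the subspace topology) is a Fréchet space:
    (hfrechet : ∀ n, CompleteSpace (F n) ∧
      TopologicalSpace.PseudoMetrizableSpace (F n))
    -- characterization of the inductive limit topology on convex sets:
    (hind : ∀ U : Set E, Convex ℝ U → (0:E) ∈ U →
      (U ∈ nhds (0:E) ↔ ∀ n, ((↑) ⁻¹' U : Set (F n)) ∈ nhds (0 : F n)))
    (u : ℝ → E)
    (hmod : ∀ U : Set E, Convex ℝ U → U ∈ nhds (0:E) → ∃ (N : ℕ) (ε₀ : ℝ), 0 < ε₀ ∧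
      ∀ ε ∈ Set.Ioc (0:ℝ) 1, ε ≤ ε₀ → u ε ∈ (ε ^ (-(N:ℤ))) • U) :
    ∃ (m : ℕ) (ε₀ : ℝ), 0 < ε₀ ∧ ∀ ε ∈ Set.Ioc (0:ℝ) 1, ε ≤ ε₀ → u ε ∈ F m :=
  stmt3_general F hmono hclosed hind u hmod
end

section
/- Let (f_ε)_{ε∈(0,1]} be a family of smooth functions on ℝ^d, all supported in a fixed compact set K, and suppose there exists M∈ℕ such that for every multi-index β, sup_{ξ} |ξ|^{|β|} |f̂_ε(ξ)| ≤ ε^{-M} for all small ε. If for every k∈ℕ there is N∈ℕ with sup_{|ξ| ≤ ε^{-1/N}} |f̂_ε(ξ)| ≤ ε^k for small ε, then for every k∈ℕ and every bounded family of points (x_ε), |f_ε(x_ε)| ≤ ε^k for all small ε. -/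
set_option maxHeartbeats 1000000
open MeasureTheory FourierTransform Real

/-- The Fourier transform `f̂(ξ) = ∫ f(x) e^{-iξ·x} dx`. -/
noncomputable def fhat {d : ℕ} (f : EuclideanSpace ℝ (Fin d) → ℂ)
    (ξ : EuclideanSpace ℝ (Fin d)) : ℂ :=
  ∫ x, f x * Complex.exp (-(Complex.I * ((inner ℝ ξ x : ℝ) : ℂ)))

lemma fourier_eq_fhat {d : ℕ} (f : EuclideanSpace ℝ (Fin d) → ℂ)
    (w : EuclideanSpace ℝ (Fin d)) : 𝓕 f w = fhat f ((2 * π) • w) := by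
  rw [Real.fourier_eq', fhat]
  congr 1 with v
  rw [real_inner_smul_left, smul_eq_mul, mul_comm (f v)]
  congr 1
  push_cast
  rw [real_inner_comm]
  ring

/-- If `(f_ε)` is uniformly supported in `K`, is `G^∞`-regular in the Fourier picture,
and `f̂_ε` decays rapidly on slow-scale balls, then `f_ε` is negligible at bounded points. -/
theorem stmt5 {d : ℕ} (K : Set (EuclideanSpace ℝ (Fin d))) (hK : IsCompact K)
    (f : ℝ → EuclideanSpace ℝ (Fin d) → ℂ)
    (hsmooth : ∀ ε ∈ Set.Ioc (0:ℝ) 1, ContDiff ℝ (⊤ : ℕ∞) (f ε))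
    (hsupp : ∀ ε ∈ Set.Ioc (0:ℝ) 1, tsupport (f ε) ⊆ K)
    (M : ℕ)
    (hmod : ∀ k : ℕ, ∃ ε₀ : ℝ, 0 < ε₀ ∧ ∀ ε ∈ Set.Ioc (0:ℝ) 1, ε ≤ ε₀ →
      ∀ ξ, ‖ξ‖ ^ k * ‖fhat (f ε) ξ‖ ≤ ε ^ (-(M:ℤ)))
    (hdecay : ∀ k : ℕ, ∃ N : ℕ, 0 < N ∧ ∃ ε₀ : ℝ, 0 < ε₀ ∧
      ∀ ε ∈ Set.Ioc (0:ℝ) 1, ε ≤ ε₀ →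
      ∀ ξ, ‖ξ‖ ≤ ε ^ (-(1:ℝ)/N) → ‖fhat (f ε) ξ‖ ≤ ε ^ k) :
    ∀ (k : ℕ) (x : ℝ → EuclideanSpace ℝ (Fin d)), (∃ C : ℝ, ∀ ε, ‖x ε‖ ≤ C) →
      ∃ ε₀ : ℝ, 0 < ε₀ ∧ ∀ ε ∈ Set.Ioc (0:ℝ) 1, ε ≤ ε₀ → ‖f ε (x ε)‖ ≤ ε ^ k := by
  intro k x _
  obtain ⟨N, hN, ε₁, hε₁, hdec⟩ := hdecay (k + d + 1)
  set j : ℕ := N * (M + k + 1) with hj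
  obtain ⟨ε₂, hε₂, hmod₂⟩ := hmod (d + 1 + j)
  obtain ⟨ε₃, hε₃, hmod₃⟩ := hmod 0
  obtain ⟨ε₄, hε₄, hmod₄⟩ := hmod (d + 1)
  set c₁ : ℝ := (volume (Metric.ball (0 : EuclideanSpace ℝ (Fin d)) 1)).toReal with hc₁
  set C₀ : ℝ := ∫ w : EuclideanSpace ℝ (Fin d), (1 + ‖w‖) ^ (-(d + 1 : ℝ)) with hC₀
  have hC₀nn : 0 ≤ C₀ := integral_nonneg fun w => rpow_nonneg (by positivity) _
  have hc₁nn : 0 ≤ c₁ := ENNReal.toReal_nonneg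
  set A : ℝ := c₁ + 2 ^ (d + 1) * C₀ with hA
  have hAnn : 0 ≤ A := by positivity
  have hπ : (0:ℝ) < 2 * π := by positivity
  refine ⟨min (min ε₁ (min ε₂ (min ε₃ ε₄))) (min ((2 * π)⁻¹ ^ N) (A + 1)⁻¹), by positivity, ?_⟩
  rintro ε ⟨hε0, hε1⟩ hεle
  have hεle1 : ε ≤ ε₁ := le_trans hεle (le_trans (min_le_left _ _) (min_le_left _ _))
  have hεle2 : ε ≤ ε₂ := le_trans hεle (le_trans (min_le_left _ _)
    (le_trans (min_le_right _ _) (min_le_left _ _)))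
  have hεle3 : ε ≤ ε₃ := le_trans hεle (le_trans (min_le_left _ _)
    (le_trans (min_le_right _ _) (le_trans (min_le_right _ _) (min_le_left _ _))))
  have hεle4 : ε ≤ ε₄ := le_trans hεle (le_trans (min_le_left _ _)
    (le_trans (min_le_right _ _) (le_trans (min_le_right _ _) (min_le_right _ _))))
  have hεleπ : ε ≤ (2 * π)⁻¹ ^ N := le_trans hεle (le_trans (min_le_right _ _) (min_le_left _ _))
  have hεleA : ε ≤ (A + 1)⁻¹ := le_trans hεle (le_trans (min_le_right _ _) (min_le_right _ _))
  have hεmem : ε ∈ Set.Ioc (0:ℝ) 1 := ⟨hε0, hε1⟩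
  -- basic facts about f ε
  have hcont : Continuous (f ε) := (hsmooth ε hεmem).continuous
  have hcs : HasCompactSupport (f ε) :=
    hK.of_isClosed_subset (isClosed_tsupport _) (hsupp ε hεmem)
  have hint : Integrable (f ε) := hcont.integrable_of_hasCompactSupport hcs
  -- zpow to rpow
  have hzr : (ε:ℝ) ^ (-(M:ℤ)) = ε ^ (-(M:ℝ)) := by
    rw [← Real.rpow_intCast]; norm_num
  -- bound on 𝓕 (f ε) for integrability
  have hFbound : ∀ w, ‖𝓕 (f ε) w‖ ≤
      (2 ^ (d + 2) * ε ^ (-(M:ℝ))) * (1 + ‖w‖) ^ (-(d + 1 : ℝ)) := by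
    intro w
    rw [fourier_eq_fhat]
    set η := (2 * π) • w with hη
    have hηn : ‖η‖ = (2 * π) * ‖w‖ := by
      rw [hη, norm_smul, Real.norm_eq_abs, abs_of_pos hπ]
    have h1 : ‖fhat (f ε) η‖ ≤ ε ^ (-(M:ℝ)) := by
      have := hmod₃ ε hεmem hεle3 η
      rw [pow_zero, one_mul, hzr] at this; exact this
    have h2 : ‖η‖ ^ (d + 1) * ‖fhat (f ε) η‖ ≤ ε ^ (-(M:ℝ)) := by
      rw [← hzr]; exact hmod₄ ε hεmem hεle4 η
    have hw1 : 1 + ‖w‖ ≤ 2 * max 1 ‖η‖ := by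
      rcases le_total ‖η‖ 1 with h | h
      · have : ‖w‖ ≤ ‖η‖ := by
          rw [hηn]; nlinarith [norm_nonneg w, pi_gt_three]
        rw [max_eq_left h]; linarith
      · have : ‖w‖ ≤ ‖η‖ := by
          rw [hηn]; nlinarith [norm_nonneg w, pi_gt_three]
        rw [max_eq_right h]; linarith [norm_nonneg w]
    have hmax : (max 1 ‖η‖) ^ (d + 1) ≤ 1 + ‖η‖ ^ (d + 1) := by
      rcases max_cases 1 ‖η‖ with ⟨h, _⟩ | ⟨h, _⟩
      · rw [h, one_pow]
        nlinarith [pow_nonneg (norm_nonneg η) (d+1)]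
      · rw [h]; nlinarith [pow_nonneg (norm_nonneg η) (d+1)]
    have hkey : (1 + ‖w‖) ^ (d + 1) * ‖fhat (f ε) η‖ ≤ 2 ^ (d + 2) * ε ^ (-(M:ℝ)) := by
      have e1 : (1 + ‖w‖) ^ (d + 1) ≤ 2 ^ (d + 1) * (1 + ‖η‖ ^ (d + 1)) := by
        calc (1 + ‖w‖) ^ (d + 1) ≤ (2 * max 1 ‖η‖) ^ (d + 1) := by
              apply pow_le_pow_left₀ (by positivity) hw1
          _ = 2 ^ (d + 1) * (max 1 ‖η‖) ^ (d + 1) := by rw [mul_pow]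
          _ ≤ 2 ^ (d + 1) * (1 + ‖η‖ ^ (d + 1)) := by
              apply mul_le_mul_of_nonneg_left hmax (by positivity)
      calc (1 + ‖w‖) ^ (d + 1) * ‖fhat (f ε) η‖
          ≤ 2 ^ (d + 1) * (1 + ‖η‖ ^ (d + 1)) * ‖fhat (f ε) η‖ :=
            mul_le_mul_of_nonneg_right e1 (norm_nonneg _)
        _ = 2 ^ (d + 1) * (‖fhat (f ε) η‖ + ‖η‖ ^ (d + 1) * ‖fhat (f ε) η‖) := by ring
        _ ≤ 2 ^ (d + 1) * (ε ^ (-(M:ℝ)) + ε ^ (-(M:ℝ))) := by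
            apply mul_le_mul_of_nonneg_left (add_le_add h1 h2) (by positivity)
        _ = 2 ^ (d + 2) * ε ^ (-(M:ℝ)) := by ring
    have hwpos : (0:ℝ) < 1 + ‖w‖ := by positivity
    have hre : (1 + ‖w‖) ^ ((d:ℝ) + 1) = (1 + ‖w‖) ^ (d + 1) := by
      rw [← Real.rpow_natCast (1 + ‖w‖) (d + 1)]
      push_cast; ring_nf
    rw [Real.rpow_neg hwpos.le, hre, ← div_eq_mul_inv, le_div_iff₀ (by positivity)]
    linarith [hkey, mul_comm (‖fhat (f ε) η‖) ((1 + ‖w‖) ^ (d + 1))]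
  have hfinrank : Module.finrank ℝ (EuclideanSpace ℝ (Fin d)) = d := by
    simp [finrank_euclideanSpace]
  have hint1 : Integrable (fun w : EuclideanSpace ℝ (Fin d) => (1 + ‖w‖) ^ (-(d + 1 : ℝ)))
      volume := by
    apply integrable_one_add_norm
    rw [hfinrank]; push_cast; linarith
  have hFmeas : Continuous (𝓕 (f ε)) :=
    VectorFourier.fourierIntegral_continuous Real.continuous_fourierChar
      (by exact continuous_inner) hint
  have hFint : Integrable (𝓕 (f ε)) := by
    refine (hint1.const_mul (2 ^ (d + 2) * ε ^ (-(M:ℝ)))).mono'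
      hFmeas.aestronglyMeasurable (Filter.Eventually.of_forall hFbound)
  -- Fourier inversion and the basic bound
  have hmain : ‖f ε (x ε)‖ ≤ ∫ w, ‖𝓕 (f ε) w‖ := by
    rw [← hint.fourierInv_fourier_eq hFint hcont.continuousAt]
    exact VectorFourier.norm_fourierIntegral_le_integral_norm _ _ _ _ _
  -- the scales
  set δ : ℝ := ε ^ (-(1:ℝ)/(N:ℝ)) with hδdef
  have hδpos : 0 < δ := Real.rpow_pos_of_pos hε0 _
  have hNne : (N:ℝ) ≠ 0 := by exact_mod_cast hN.ne'
  have hexp_nonpos : -(1:ℝ)/(N:ℝ) ≤ 0 :=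
    div_nonpos_of_nonpos_of_nonneg (by norm_num) (Nat.cast_nonneg N)
  have hδge : 2 * π ≤ δ := by
    have h1 : ((2*π)⁻¹ ^ N : ℝ) = (2*π) ^ (-(N:ℝ)) := by
      rw [inv_pow, ← Real.rpow_natCast (2*π) N, ← Real.rpow_neg hπ.le]
    have h2 : ((2*π) ^ (-(N:ℝ))) ^ (-(1:ℝ)/(N:ℝ)) ≤ δ := by
      rw [hδdef]
      exact Real.rpow_le_rpow_of_nonpos hε0 (h1 ▸ hεleπ) hexp_nonpos
    have h3 : ((2*π) ^ (-(N:ℝ))) ^ (-(1:ℝ)/(N:ℝ)) = 2 * π := by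
      rw [← Real.rpow_mul hπ.le,
        show (-(N:ℝ)) * (-(1:ℝ)/(N:ℝ)) = 1 by field_simp, Real.rpow_one]
    linarith [h3 ▸ h2]
  set S : ℝ := δ / (2 * π) with hSdef
  have hSpos : 0 < S := div_pos hδpos hπ
  have hS1 : 1 ≤ S := (one_le_div hπ).mpr hδge
  have hSδ : S ≤ δ := div_le_self hδpos.le (by nlinarith [pi_gt_three])
  have h2πS : 2 * π * S = δ := by rw [hSdef]; field_simp
  -- inner estimate
  have h_in : ∀ w ∈ Metric.ball (0 : EuclideanSpace ℝ (Fin d)) S,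
      ‖𝓕 (f ε) w‖ ≤ ε ^ (k + d + 1) := by
    intro w hw
    rw [fourier_eq_fhat]
    apply hdec ε hεmem hεle1
    rw [norm_smul, Real.norm_eq_abs, abs_of_pos hπ, ← hδdef, ← h2πS]
    have hwS : ‖w‖ < S := by simpa [Metric.mem_ball, dist_zero_right] using hw
    nlinarith
  have hball : ∫ w in Metric.ball (0 : EuclideanSpace ℝ (Fin d)) S, ‖𝓕 (f ε) w‖
      ≤ (volume (Metric.ball (0 : EuclideanSpace ℝ (Fin d)) S)).toReal * ε ^ (k + d + 1) := by
    have := setIntegral_mono_on hFint.norm.integrableOn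
      (integrableOn_const measure_ball_lt_top.ne) measurableSet_ball h_in
    simpa [setIntegral_const, smul_eq_mul, Measure.real] using this
  have hvol : (volume (Metric.ball (0 : EuclideanSpace ℝ (Fin d)) S)).toReal
      ≤ ε ^ (-(d:ℝ)) * c₁ := by
    rw [Measure.addHaar_ball_of_pos _ _ hSpos, ENNReal.toReal_mul,
      ENNReal.toReal_ofReal (by positivity), hfinrank]
    apply mul_le_mul_of_nonneg_right _ hc₁nn
    calc S ^ d ≤ δ ^ d := pow_le_pow_left₀ hSpos.le hSδ d
      _ = ε ^ (-((d:ℝ)/(N:ℝ))) := by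
          rw [hδdef, ← Real.rpow_natCast (ε ^ (-(1:ℝ)/(N:ℝ))) d, ← Real.rpow_mul hε0.le]
          congr 1; ring
      _ ≤ ε ^ (-(d:ℝ)) := by
          apply Real.rpow_le_rpow_of_exponent_ge hε0 hε1
          have hd : (d:ℝ)/(N:ℝ) ≤ (d:ℝ) := by
            apply div_le_self (Nat.cast_nonneg d)
            exact_mod_cast hN
          linarith
  -- power bookkeeping
  have hδinv : δ⁻¹ = ε ^ ((1:ℝ)/(N:ℝ)) := by
    rw [hδdef, ← Real.rpow_neg hε0.le]; congr 1; ring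
  have hpowj : δ⁻¹ ^ j = ε ^ ((M:ℝ) + k + 1) := by
    rw [hδinv, ← Real.rpow_natCast (ε ^ ((1:ℝ)/(N:ℝ))) j, ← Real.rpow_mul hε0.le]
    congr 1
    rw [hj]; push_cast; field_simp
  have hMj : ε ^ (-(M:ℝ)) * δ⁻¹ ^ j = ε ^ ((k:ℝ) + 1) := by
    rw [hpowj, ← Real.rpow_add hε0]; congr 1; ring
  -- outer estimate
  have h_out : ∀ w ∈ (Metric.ball (0 : EuclideanSpace ℝ (Fin d)) S)ᶜ,
      ‖𝓕 (f ε) w‖ ≤ (2 ^ (d+1) * ε ^ ((k:ℝ)+1)) * (1 + ‖w‖) ^ (-(d + 1 : ℝ)) := by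
    intro w hw
    have hwS : S ≤ ‖w‖ := by
      simpa [Metric.mem_ball, dist_zero_right, not_lt] using hw
    rw [fourier_eq_fhat]
    set η := (2 * π) • w with hη
    have hηn : ‖η‖ = (2 * π) * ‖w‖ := by
      rw [hη, norm_smul, Real.norm_eq_abs, abs_of_pos hπ]
    have hηδ : δ ≤ ‖η‖ := by
      rw [hηn, ← h2πS]; nlinarith
    have hη1 : (1:ℝ) ≤ ‖η‖ := le_trans (by nlinarith [pi_gt_three]) hηδ
    have h2 : ‖η‖ ^ (d + 1 + j) * ‖fhat (f ε) η‖ ≤ ε ^ (-(M:ℝ)) := by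
      rw [← hzr]; exact hmod₂ ε hεmem hεle2 η
    have hfb : ‖fhat (f ε) η‖ * ‖η‖ ^ (d+1) * δ ^ j ≤ ε ^ (-(M:ℝ)) := by
      calc ‖fhat (f ε) η‖ * ‖η‖ ^ (d+1) * δ ^ j
          ≤ ‖fhat (f ε) η‖ * ‖η‖ ^ (d+1) * ‖η‖ ^ j := by
            apply mul_le_mul_of_nonneg_left (pow_le_pow_left₀ hδpos.le hηδ j) (by positivity)
        _ = ‖η‖ ^ (d + 1 + j) * ‖fhat (f ε) η‖ := by rw [pow_add]; ring
        _ ≤ _ := h2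
    have hww : 1 + ‖w‖ ≤ 2 * ‖η‖ := by
      have h1w : 1 ≤ ‖w‖ := le_trans hS1 hwS
      rw [hηn]; nlinarith [pi_gt_three]
    have hwpos : (0:ℝ) < 1 + ‖w‖ := by positivity
    have hre : (1 + ‖w‖) ^ ((d:ℝ) + 1) = (1 + ‖w‖) ^ (d + 1) := by
      rw [← Real.rpow_natCast (1 + ‖w‖) (d + 1)]; push_cast; ring_nf
    rw [Real.rpow_neg hwpos.le, hre, ← div_eq_mul_inv, le_div_iff₀ (by positivity)]
    calc ‖fhat (f ε) η‖ * (1 + ‖w‖) ^ (d+1)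
        ≤ ‖fhat (f ε) η‖ * (2 * ‖η‖) ^ (d+1) :=
          mul_le_mul_of_nonneg_left (pow_le_pow_left₀ hwpos.le hww _) (norm_nonneg _)
      _ = 2 ^ (d+1) * (‖fhat (f ε) η‖ * ‖η‖ ^ (d+1)) := by rw [mul_pow]; ring
      _ ≤ 2 ^ (d+1) * (ε ^ (-(M:ℝ)) * δ⁻¹ ^ j) := by
          apply mul_le_mul_of_nonneg_left _ (by positivity)
          rw [inv_pow, ← div_eq_mul_inv, le_div_iff₀ (by positivity)]
          exact hfb
      _ = 2 ^ (d+1) * ε ^ ((k:ℝ)+1) := by rw [hMj]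
  have hint2 : Integrable (fun w : EuclideanSpace ℝ (Fin d) =>
      (2 ^ (d+1) * ε ^ ((k:ℝ)+1)) * (1 + ‖w‖) ^ (-(d + 1 : ℝ))) volume := hint1.const_mul _
  have hcompl : ∫ w in (Metric.ball (0 : EuclideanSpace ℝ (Fin d)) S)ᶜ, ‖𝓕 (f ε) w‖
      ≤ 2 ^ (d+1) * ε ^ ((k:ℝ)+1) * C₀ := by
    calc ∫ w in (Metric.ball (0 : EuclideanSpace ℝ (Fin d)) S)ᶜ, ‖𝓕 (f ε) w‖
        ≤ ∫ w in (Metric.ball (0 : EuclideanSpace ℝ (Fin d)) S)ᶜ,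
            (2 ^ (d+1) * ε ^ ((k:ℝ)+1)) * (1 + ‖w‖) ^ (-(d + 1 : ℝ)) :=
          setIntegral_mono_on hFint.norm.integrableOn hint2.integrableOn
            measurableSet_ball.compl h_out
      _ ≤ ∫ w, (2 ^ (d+1) * ε ^ ((k:ℝ)+1)) * (1 + ‖w‖) ^ (-(d + 1 : ℝ)) :=
          setIntegral_le_integral hint2 (Filter.Eventually.of_forall fun w => by positivity)
      _ = 2 ^ (d+1) * ε ^ ((k:ℝ)+1) * C₀ := by
          rw [hC₀, MeasureTheory.integral_const_mul]
  have hsplit : (∫ w, ‖𝓕 (f ε) w‖) =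
      (∫ w in Metric.ball (0 : EuclideanSpace ℝ (Fin d)) S, ‖𝓕 (f ε) w‖) +
      ∫ w in (Metric.ball (0 : EuclideanSpace ℝ (Fin d)) S)ᶜ, ‖𝓕 (f ε) w‖ :=
    (integral_add_compl measurableSet_ball hFint.norm).symm
  have hpow1 : ε ^ (-(d:ℝ)) * ε ^ (k + d + 1) = ε ^ ((k:ℝ)+1) := by
    rw [← Real.rpow_natCast ε (k+d+1), ← Real.rpow_add hε0]; congr 1; push_cast; ring
  have hεk : ε ^ ((k:ℝ)+1) = ε * ε ^ k := by
    rw [show ((k:ℝ)+1) = ((k+1:ℕ):ℝ) by push_cast; ring, Real.rpow_natCast, pow_succ]; ring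
  have hAε : A * ε ≤ 1 := by
    calc A * ε ≤ A * (A+1)⁻¹ := mul_le_mul_of_nonneg_left hεleA hAnn
      _ ≤ (A+1) * (A+1)⁻¹ := by
          apply mul_le_mul_of_nonneg_right (by linarith) (by positivity)
      _ = 1 := mul_inv_cancel₀ (by positivity)
  have hεknn : (0:ℝ) ≤ ε ^ k := by positivity
  calc ‖f ε (x ε)‖ ≤ ∫ w, ‖𝓕 (f ε) w‖ := hmain
    _ = _ := hsplit
    _ ≤ (ε ^ (-(d:ℝ)) * c₁) * ε ^ (k + d + 1) + 2 ^ (d+1) * ε ^ ((k:ℝ)+1) * C₀ := by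
        apply add_le_add _ hcompl
        exact le_trans hball (mul_le_mul_of_nonneg_right hvol (by positivity))
    _ = (c₁ + 2 ^ (d+1) * C₀) * ε ^ ((k:ℝ)+1) := by rw [← hpow1]; ring
    _ = (A * ε) * ε ^ k := by rw [← hA, hεk]; ring
    _ ≤ 1 * ε ^ k := mul_le_mul_of_nonneg_right hAε hεknn
    _ = ε ^ k := one_mul _
end

section
/- Let ρ ∈ 𝒮(ℝ) be a Schwartz function with ∫_ℝ t^m ρ(t) dt = 0 for all integers m ≥ 1 and ∫_ℝ ρ = 1, and set g_ε(t) = ε^{-1}[2ρ(2(t−1)/ε) − ρ((t−1)/ε)]. Then for every ψ ∈ C_c^∞(ℝ) and every m ∈ ℕ, |∫_ℝ g_ε(r) ψ(r) dr| ≤ C_m ε^m sup_r |ψ^{(m)}(r)| for all ε ∈ (0,1], where C_m = (1/m!) ∫_ℝ |r|^m (2|ρ(2r)| + |ρ(r)|) dr. -/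
open MeasureTheory intervalIntegral

lemma myTaylorBound (m : ℕ) : ∀ (ψ : ℝ → ℝ), ContDiff ℝ (⊤ : ℕ∞) ψ → ∀ (M : ℝ),
    (∀ x, |iteratedDeriv m ψ x| ≤ M) → ∀ x₀ x : ℝ,
    |ψ x - ∑ k ∈ Finset.range m, iteratedDeriv k ψ x₀ * (x - x₀) ^ k / k.factorial|
      ≤ M * |x - x₀| ^ m / m.factorial := by
  induction m with
  | zero =>
    intro ψ _ M hM x₀ x
    simpa using hM x
  | succ m ih =>
    intro ψ hψ M hM x₀ x
    have hMnn : 0 ≤ M := (abs_nonneg _).trans (hM x)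
    set φ := deriv ψ with hφdef
    have hψd : Differentiable ℝ ψ := hψ.differentiable (by simp)
    have hφ : ContDiff ℝ (⊤ : ℕ∞) φ := (contDiff_infty_iff_deriv.mp hψ).2
    have hMφ : ∀ y, |iteratedDeriv m φ y| ≤ M := by
      intro y
      have := hM y
      rwa [iteratedDeriv_succ', ← hφdef] at this
    -- the function whose derivative we control
    set S : ℝ → ℝ := fun y =>
      ψ y - ∑ k ∈ Finset.range (m+1), iteratedDeriv k ψ x₀ * (y - x₀) ^ k / k.factorial with hSdef
    set T : ℝ → ℝ := fun y =>
      φ y - ∑ k ∈ Finset.range m, iteratedDeriv k φ x₀ * (y - x₀) ^ k / k.factorial with hTdef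
    have hS0 : S x₀ = 0 := by
      simp only [hSdef, sub_self]
      rw [Finset.sum_eq_single_of_mem 0 (by simp)]
      · simp
      · intro k _ hk
        simp [zero_pow hk]
    have hderiv : ∀ y, HasDerivAt S (T y) y := by
      intro y
      have h1 : HasDerivAt (fun y => ∑ k ∈ Finset.range (m+1),
          iteratedDeriv k ψ x₀ * (y - x₀) ^ k / k.factorial)
          (∑ k ∈ Finset.range (m+1),
            iteratedDeriv k ψ x₀ * ((k : ℝ) * (y - x₀) ^ (k - 1) * 1) / k.factorial) y := by
        apply HasDerivAt.fun_sum
        intro k _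
        exact (((hasDerivAt_id y).sub_const x₀).pow k).const_mul _ |>.div_const _
      have h2 : (∑ k ∈ Finset.range (m+1),
            iteratedDeriv k ψ x₀ * ((k : ℝ) * (y - x₀) ^ (k - 1) * 1) / k.factorial)
          = ∑ k ∈ Finset.range m, iteratedDeriv k φ x₀ * (y - x₀) ^ k / k.factorial := by
        rw [Finset.sum_range_succ']
        simp only [Nat.cast_zero, zero_mul, mul_zero, pow_zero, mul_one, zero_div, add_zero,
          Nat.add_sub_cancel]
        apply Finset.sum_congr rfl
        intro k _
        rw [iteratedDeriv_succ', ← hφdef]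
        have : ((k+1 : ℕ).factorial : ℝ) = (k+1 : ℝ) * (k.factorial : ℝ) := by
          rw [Nat.factorial_succ]; push_cast; ring
        rw [this]
        have hk1 : ((k : ℝ) + 1) ≠ 0 := by positivity
        field_simp
        push_cast; ring
      have := ((hψd y).hasDerivAt).sub (h1)
      rw [h2] at this
      exact this
    have hTcont : Continuous T := by
      apply hφ.continuous.sub
      exact continuous_finset_sum _ fun k _ =>
        ((continuous_const.mul ((continuous_id.sub continuous_const).pow k)).div_const _)
    have hftc : ∫ t in x₀..x, T t = S x - S x₀ :=
      integral_eq_sub_of_hasDerivAt (fun t _ => hderiv t)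
        (hTcont.intervalIntegrable _ _)
    have hbound : ∀ t, |T t| ≤ M * |t - x₀| ^ m / m.factorial := fun t => ih φ hφ M hMφ x₀ t
    have key : |S x| ≤ |∫ t in x₀..x, M * |t - x₀| ^ m / m.factorial| := by
      rw [← sub_zero (S x), ← hS0, ← hftc]
      have := intervalIntegral.norm_integral_le_abs_of_norm_le (μ := volume) (a := x₀) (b := x)
        (f := T) (g := fun t => M * |t - x₀| ^ m / m.factorial)
        (Filter.Eventually.of_forall fun t => by simpa [Real.norm_eq_abs] using hbound t)
        (((continuous_const.mul ((continuous_id.sub continuous_const).abs.pow m)).div_const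
          _).intervalIntegrable _ _)
      simpa [Real.norm_eq_abs] using this
    calc |S x| ≤ |∫ t in x₀..x, M * |t - x₀| ^ m / m.factorial| := key
      _ = M * |x - x₀| ^ (m+1) / (m+1).factorial := by
          have : (fun t => M * |t - x₀| ^ m / m.factorial)
              = fun t => (M / m.factorial) * |t - x₀| ^ m := by funext t; ring
          rw [this, intervalIntegral.integral_const_mul, abs_mul,
            intervalIntegral.abs_intervalIntegral_eq, integral_pow_abs_sub_uIoc]
          rw [abs_of_nonneg (by positivity), abs_of_nonneg (by positivity)]
          rw [Nat.factorial_succ]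
          push_cast
          have h1 : (m.factorial : ℝ) ≠ 0 := by positivity
          have h2 : ((m:ℝ)+1) ≠ 0 := by positivity
          rw [div_mul_div_comm, div_eq_div_iff (by positivity) (by positivity)]
          ring

lemma myHCSIter (ψ : ℝ → ℝ) (h : HasCompactSupport ψ) (m : ℕ) :
    HasCompactSupport (iteratedDeriv m ψ) := by
  induction m with
  | zero => simpa [iteratedDeriv_zero] using h
  | succ m ih => rw [iteratedDeriv_succ]; exact ih.deriv

/-- Moment estimate for the net `g_ε(t) = ε⁻¹(2ρ(2(t−1)/ε) − ρ((t−1)/ε))` built from a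
Schwartz function with vanishing higher moments. -/
theorem stmt12 (ρ : SchwartzMap ℝ ℝ)
    (hmom : ∀ m : ℕ, 1 ≤ m → (∫ t, t ^ m * ρ t) = 0)
    (hint : (∫ t, ρ t) = 1)
    (ψ : ℝ → ℝ) (hψ : ContDiff ℝ (⊤ : ℕ∞) ψ) (hψc : HasCompactSupport ψ) (m : ℕ)
    (ε : ℝ) (hε : ε ∈ Set.Ioc (0:ℝ) 1) :
    |∫ r, (ε⁻¹ * (2 * ρ (2 * (r - 1) / ε) - ρ ((r - 1) / ε))) * ψ r| ≤
      ((1 / (m.factorial : ℝ)) * ∫ r, |r| ^ m * (2 * |ρ (2 * r)| + |ρ r|)) * ε ^ m *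
        ⨆ r : ℝ, |iteratedDeriv m ψ r| := by
  obtain ⟨hε0, hε1⟩ := hε
  have hεne : ε ≠ 0 := ne_of_gt hε0
  have hψ' : ContDiff ℝ (⊤ : ℕ∞) ψ := hψ.of_le (by simp)
  set g : ℝ → ℝ := fun t => 2 * ρ (2 * t) - ρ t with hgdef
  -- basic integrability
  have hpm : ∀ k : ℕ, Integrable (fun t : ℝ => t ^ k * ρ t) := by
    intro k
    refine (ρ.integrable_pow_mul volume k).mono' ?_ ?_
    · exact ((continuous_pow k).mul ρ.continuous).aestronglyMeasurable
    · refine Filter.Eventually.of_forall fun t => ?_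
      simp [abs_mul, abs_pow, Real.norm_eq_abs]
  have hpm2 : ∀ k : ℕ, Integrable (fun t : ℝ => ρ (2 * t) * t ^ k) := by
    intro k
    have h1 : Integrable (fun t : ℝ => (2 * t) ^ k * ρ (2 * t)) :=
      (hpm k).comp_mul_left' two_ne_zero
    have h2 : (fun t : ℝ => ρ (2 * t) * t ^ k)
        = fun t => ((2:ℝ) ^ k)⁻¹ * ((2 * t) ^ k * ρ (2 * t)) := by
      funext t
      rw [mul_pow]
      field_simp
    rw [h2]
    exact h1.const_mul _
  have hgk : ∀ k : ℕ, Integrable (fun t : ℝ => g t * t ^ k) := by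
    intro k
    have : (fun t : ℝ => g t * t ^ k)
        = fun t => 2 * (ρ (2 * t) * t ^ k) - t ^ k * ρ t := by
      funext t; simp only [hgdef]; ring
    rw [this]
    exact ((hpm2 k).const_mul 2).sub (hpm k)
  have hgi : Integrable g := by
    have := hgk 0
    simpa using this
  -- moments vanish
  have hA : ∀ k : ℕ, ∫ t, ρ (2 * t) * t ^ k
      = (2:ℝ)⁻¹ * ((2:ℝ) ^ k)⁻¹ * ∫ t, t ^ k * ρ t := by
    intro k
    have h2 : (fun t : ℝ => ρ (2 * t) * t ^ k)
        = fun t => ((2:ℝ) ^ k)⁻¹ * ((fun s => s ^ k * ρ s) (2 * t)) := by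
      funext t
      simp only [mul_pow]
      field_simp
    rw [h2, MeasureTheory.integral_const_mul, MeasureTheory.Measure.integral_comp_mul_left
      (fun s => s ^ k * ρ s) 2]
    rw [smul_eq_mul, abs_of_pos (by norm_num : (0:ℝ) < 2⁻¹)]
    norm_num
    ring
  have hJ : ∀ k : ℕ, ∫ t, g t * t ^ k = 0 := by
    intro k
    have h1 : (fun t : ℝ => g t * t ^ k)
        = fun t => 2 * (ρ (2 * t) * t ^ k) - t ^ k * ρ t := by
      funext t; simp only [hgdef]; ring
    rw [h1, integral_sub ((hpm2 k).const_mul 2) (hpm k), MeasureTheory.integral_const_mul, hA]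
    rcases Nat.eq_zero_or_pos k with rfl | hk
    · simp only [pow_zero, mul_one, inv_one, one_mul]
      rw [hint]
      norm_num
    · rw [hmom k hk]; ring
  -- substitution r = 1 + ε t
  set F : ℝ → ℝ := fun r => (2 * ρ (2 * (r - 1) / ε) - ρ ((r - 1) / ε)) * ψ r with hFdef
  have hsub : ∫ r, (ε⁻¹ * (2 * ρ (2 * (r - 1) / ε) - ρ ((r - 1) / ε))) * ψ r
      = ∫ t, g t * ψ (1 + ε * t) := by
    have h1 : ∫ r, (ε⁻¹ * (2 * ρ (2 * (r - 1) / ε) - ρ ((r - 1) / ε))) * ψ r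
        = ε⁻¹ * ∫ r, F r := by
      rw [← MeasureTheory.integral_const_mul]
      congr 1; funext r; simp only [hFdef]; ring
    have h2 : ∫ t, g t * ψ (1 + ε * t) = ∫ t, (fun s => F (s + 1)) (ε * t) := by
      congr 1; funext t
      simp only [hFdef, hgdef]
      rw [show 2 * (ε * t + 1 - 1) / ε = 2 * t by field_simp; ring,
        show (ε * t + 1 - 1) / ε = t by field_simp; ring]
      rw [show (1 : ℝ) + ε * t = ε * t + 1 by ring]
    rw [h1, h2, MeasureTheory.Measure.integral_comp_mul_left (fun s => F (s + 1)) ε,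
      integral_add_right_eq_self F 1]
    rw [smul_eq_mul, abs_of_pos (inv_pos.mpr hε0)]
  rw [hsub]
  -- sup bound on m-th derivative
  set M : ℝ := ⨆ r : ℝ, |iteratedDeriv m ψ r| with hMdef
  have hcont_iter : Continuous (iteratedDeriv m ψ) := hψ.continuous_iteratedDeriv m (by exact_mod_cast le_top)
  obtain ⟨C, hC⟩ := (myHCSIter ψ hψc m).exists_bound_of_continuous hcont_iter
  have hbdd : BddAbove (Set.range fun r : ℝ => |iteratedDeriv m ψ r|) := by
    refine ⟨C, ?_⟩
    rintro _ ⟨x, rfl⟩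
    simpa [Real.norm_eq_abs] using hC x
  have hM : ∀ x, |iteratedDeriv m ψ x| ≤ M := fun x => le_ciSup hbdd x
  have hMnn : 0 ≤ M := (abs_nonneg _).trans (hM 0)
  -- Taylor polynomial
  set P : ℝ → ℝ := fun t => ∑ k ∈ Finset.range m,
    iteratedDeriv k ψ 1 * (ε * t) ^ k / k.factorial with hPdef
  have htay : ∀ t : ℝ, |ψ (1 + ε * t) - P t| ≤ M * (ε ^ m * |t| ^ m) / m.factorial := by
    intro t
    have := myTaylorBound m ψ hψ' M hM 1 (1 + ε * t)
    rw [show (1 : ℝ) + ε * t - 1 = ε * t by ring] at this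
    simp only [hPdef]
    calc |ψ (1 + ε * t) - ∑ k ∈ Finset.range m,
          iteratedDeriv k ψ 1 * (ε * t) ^ k / k.factorial|
        ≤ M * |ε * t| ^ m / m.factorial := this
      _ = M * (ε ^ m * |t| ^ m) / m.factorial := by
          rw [abs_mul, mul_pow, abs_of_pos hε0]
  -- integrability of g * P and g * ψ∘
  have hgP : Integrable (fun t => g t * P t) := by
    have h1 : (fun t => g t * P t) = fun t => ∑ k ∈ Finset.range m,
        (iteratedDeriv k ψ 1 * ε ^ k / k.factorial) * (g t * t ^ k) := by
      funext t
      simp only [hPdef, Finset.mul_sum]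
      apply Finset.sum_congr rfl
      intro k _
      rw [mul_pow]
      ring
    rw [h1]
    exact integrable_finset_sum _ fun k _ => (hgk k).const_mul _
  have hintP : ∫ t, g t * P t = 0 := by
    have h1 : (fun t => g t * P t) = fun t => ∑ k ∈ Finset.range m,
        (iteratedDeriv k ψ 1 * ε ^ k / k.factorial) * (g t * t ^ k) := by
      funext t
      simp only [hPdef, Finset.mul_sum]
      apply Finset.sum_congr rfl
      intro k _
      rw [mul_pow]
      ring
    rw [h1, integral_finset_sum _ fun k _ => (hgk k).const_mul _]
    apply Finset.sum_eq_zero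
    intro k _
    rw [MeasureTheory.integral_const_mul, hJ, mul_zero]
  obtain ⟨Cψ, hCψ⟩ := hψc.exists_bound_of_continuous hψ.continuous
  have hgψi : Integrable (fun t => g t * ψ (1 + ε * t)) := by
    refine (hgi.abs.mul_const Cψ).mono' ?_ ?_
    · have hgc : Continuous g := by
        simp only [hgdef]
        exact (continuous_const.mul (ρ.continuous.comp
          (continuous_const.mul continuous_id))).sub ρ.continuous
      exact (hgc.mul (hψ.continuous.comp
        (continuous_const.add (continuous_const.mul continuous_id)))).aestronglyMeasurable
    · refine Filter.Eventually.of_forall fun t => ?_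
      rw [Real.norm_eq_abs, abs_mul]
      exact mul_le_mul_of_nonneg_left (by simpa [Real.norm_eq_abs] using hCψ (1 + ε * t))
        (abs_nonneg _)
  -- reduce to remainder
  have hsplit : ∫ t, g t * ψ (1 + ε * t) = ∫ t, g t * (ψ (1 + ε * t) - P t) := by
    have h1 : (fun t => g t * (ψ (1 + ε * t) - P t))
        = fun t => g t * ψ (1 + ε * t) - g t * P t := by funext t; ring
    rw [h1, integral_sub hgψi hgP, hintP, sub_zero]
  rw [hsplit]
  -- final bound
  set B : ℝ → ℝ := fun t => (M * ε ^ m / m.factorial)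
    * (|t| ^ m * (2 * |ρ (2 * t)| + |ρ t|)) with hBdef
  have hQ2 : Integrable (fun t : ℝ => |t| ^ m * |ρ t|) := by
    refine (ρ.integrable_pow_mul volume m).mono' ?_ ?_
    · exact ((continuous_abs.pow m).mul ρ.continuous.abs).aestronglyMeasurable
    · refine Filter.Eventually.of_forall fun t => ?_
      simp [abs_mul, abs_pow, abs_abs, Real.norm_eq_abs]
  have hQ1 : Integrable (fun t : ℝ => |t| ^ m * |ρ (2 * t)|) := by
    have h1 : Integrable (fun t : ℝ => |2 * t| ^ m * |ρ (2 * t)|) :=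
      hQ2.comp_mul_left' two_ne_zero
    have h2 : (fun t : ℝ => |t| ^ m * |ρ (2 * t)|)
        = fun t => ((2:ℝ) ^ m)⁻¹ * (|2 * t| ^ m * |ρ (2 * t)|) := by
      funext t
      rw [abs_mul, abs_two, mul_pow]
      field_simp
    rw [h2]
    exact h1.const_mul _
  have hQint : Integrable (fun t : ℝ => |t| ^ m * (2 * |ρ (2 * t)| + |ρ t|)) := by
    have h1 : (fun t : ℝ => |t| ^ m * (2 * |ρ (2 * t)| + |ρ t|))
        = fun t => 2 * (|t| ^ m * |ρ (2 * t)|) + |t| ^ m * |ρ t| := by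
      funext t; ring
    rw [h1]
    exact ((hQ1.const_mul 2).add hQ2)
  have hfac : (0:ℝ) < m.factorial := by positivity
  calc |∫ t, g t * (ψ (1 + ε * t) - P t)| ≤ ∫ t, B t := by
        rw [← Real.norm_eq_abs]
        refine MeasureTheory.norm_integral_le_of_norm_le (hQint.const_mul _)
          (Filter.Eventually.of_forall fun t => ?_)
        rw [Real.norm_eq_abs, abs_mul]
        have hg_le : |g t| ≤ 2 * |ρ (2 * t)| + |ρ t| := by
          simp only [hgdef]
          calc |2 * ρ (2 * t) - ρ t| ≤ |2 * ρ (2 * t)| + |ρ t| := abs_sub _ _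
            _ = 2 * |ρ (2 * t)| + |ρ t| := by rw [abs_mul, abs_two]
        calc |g t| * |ψ (1 + ε * t) - P t|
            ≤ (2 * |ρ (2 * t)| + |ρ t|) * (M * (ε ^ m * |t| ^ m) / m.factorial) :=
              mul_le_mul hg_le (htay t)
                (abs_nonneg _)
                (by positivity)
          _ = B t := by simp only [hBdef]; ring
    _ = (M * ε ^ m / m.factorial) * ∫ t, |t| ^ m * (2 * |ρ (2 * t)| + |ρ t|) := by
        simp only [hBdef]
        exact MeasureTheory.integral_const_mul _ _
    _ = ((1 / (m.factorial : ℝ)) * ∫ r, |r| ^ m * (2 * |ρ (2 * r)| + |ρ r|)) * ε ^ m * M := by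
        ring
end

section
/- Let f_ε(x) = e^{i x/ε} ε^{-x} e^{x^2} for x ∈ ℝ, ε ∈ (0,1]. Then for every φ ∈ 𝒟(ℝ) and every m ∈ ℕ, ∫_ℝ f_ε φ = O(ε^{m}) as ε → 0; yet for every N ∈ ℕ, sup_{|x| ≤ N} |f_ε(x)| (1+|x|)^{-N} ≥ ε^{-N} for all ε ∈ (0,1]. -/
open MeasureTheory


lemma ibp_step (l : ℂ) (hl : l ≠ 0) (ψ : ℝ → ℂ) (hψ : ContDiff ℝ ((⊤ : ℕ∞) : WithTop ℕ∞) ψ)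
    (hs : HasCompactSupport ψ) :
    ∫ x : ℝ, Complex.exp (l * x) * ψ x
      = -(1/l) * ∫ x : ℝ, Complex.exp (l * x) * deriv ψ x := by
  have hψ1 : ContDiff ℝ 1 ψ := hψ.of_le (by exact_mod_cast le_top)
  have hder : ∀ x : ℝ, HasDerivAt (fun x : ℝ => Complex.exp (l * x) * ψ x)
      (l * Complex.exp (l * x) * ψ x + Complex.exp (l * x) * deriv ψ x) x := by
    intro x
    have h1 : HasDerivAt (fun x : ℝ => Complex.exp (l * x)) (l * Complex.exp (l * x)) x := by
      have := ((Complex.hasDerivAt_exp (l * x)).comp x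
        ((hasDerivAt_id (x:ℂ)).const_mul l |>.comp_ofReal))
      simpa [mul_comm, Function.comp_def] using this
    exact h1.mul (hψ1.differentiable one_ne_zero x).hasDerivAt
  have hcψ : Continuous ψ := hψ.continuous
  have hcd : Continuous (deriv ψ) := hψ.continuous_deriv (by exact_mod_cast le_top)
  have hce : Continuous (fun x : ℝ => Complex.exp (l * x)) := by continuity
  have hsd : HasCompactSupport (deriv ψ) := hs.deriv
  have hi1 : Integrable (fun x : ℝ => Complex.exp (l * x) * ψ x) :=
    (hce.mul hcψ).integrable_of_hasCompactSupport (hs.mul_left)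
  have hi2 : Integrable (fun x : ℝ => Complex.exp (l * x) * deriv ψ x) :=
    (hce.mul hcd).integrable_of_hasCompactSupport (hsd.mul_left)
  have hi0 : Integrable (fun x : ℝ =>
      l * Complex.exp (l * x) * ψ x + Complex.exp (l * x) * deriv ψ x) := by
    have : Integrable (fun x : ℝ => l * (Complex.exp (l * x) * ψ x)) := hi1.const_mul l
    simpa [mul_assoc, Pi.add_def] using this.add hi2
  have h0 : ∫ x : ℝ, (l * Complex.exp (l * x) * ψ x + Complex.exp (l * x) * deriv ψ x) = 0 :=
    integral_eq_zero_of_hasDerivAt_of_integrable hder hi0 ((hce.mul hcψ).integrable_of_hasCompactSupport hs.mul_left)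
  rw [integral_add ((hi1.const_mul l).congr ?_ ) hi2] at h0
  · have : l * ∫ x : ℝ, Complex.exp (l * x) * ψ x = - ∫ x : ℝ, Complex.exp (l * x) * deriv ψ x := by
      rw [← integral_const_mul] at *
      have := h0
      simp only [mul_assoc] at this ⊢
      linear_combination this
    field_simp
    linear_combination this
  · filter_upwards with x; ring

lemma hcs_iter (ψ : ℝ → ℂ) (hs : HasCompactSupport ψ) (k : ℕ) :
    HasCompactSupport (deriv^[k] ψ) := by
  induction k with
  | zero => exact hs
  | succ n ih => rw [Function.iterate_succ_apply']; exact ih.deriv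

lemma ibp_iter (l : ℂ) (hl : l ≠ 0) (k : ℕ) :
    ∀ ψ : ℝ → ℂ, ContDiff ℝ ((⊤ : ℕ∞) : WithTop ℕ∞) ψ → HasCompactSupport ψ →
    ∫ x : ℝ, Complex.exp (l * x) * ψ x
      = (-(1/l))^k * ∫ x : ℝ, Complex.exp (l * x) * (deriv^[k] ψ) x := by
  induction k with
  | zero => intro ψ _ _; simp
  | succ n ih =>
      intro ψ hψ hs
      rw [ibp_step l hl ψ hψ hs,
        ih (deriv ψ) (contDiff_infty_iff_deriv.mp hψ).2 hs.deriv]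
      simp only [Function.iterate_succ_apply]
      ring


lemma tsupp_iter (ψ : ℝ → ℂ) (k : ℕ) : tsupport (deriv^[k] ψ) ⊆ tsupport ψ := by
  induction k with
  | zero => exact le_rfl
  | succ n ih =>
      rw [Function.iterate_succ_apply']
      exact (closure_minimal ((support_deriv_subset).trans ih) isClosed_closure)

lemma part2_aux (N : ℕ) (ε : ℝ) (hε : ε ∈ Set.Ioc (0:ℝ) 1) :
      ε ^ (-(N:ℝ)) ≤ ⨆ x ∈ Set.Icc (-(N:ℝ)) (N:ℝ),
        ‖Complex.exp (Complex.I * x / ε) * ((ε ^ (-x) * Real.exp (x ^ 2) : ℝ) : ℂ)‖ *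
          (1 + |x|) ^ (-(N:ℝ)) := by
  obtain ⟨hε0, hε1⟩ := hε
  set g : ℝ → ℝ := fun x =>
    ‖Complex.exp (Complex.I * x / ε) * ((ε ^ (-x) * Real.exp (x ^ 2) : ℝ) : ℂ)‖ *
      (1 + |x|) ^ (-(N:ℝ)) with hg
  have hnorm : ∀ x : ℝ, ‖Complex.exp (Complex.I * x / ε) *
      ((ε ^ (-x) * Real.exp (x ^ 2) : ℝ) : ℂ)‖ = ε ^ (-x) * Real.exp (x ^ 2) := by
    intro x
    rw [norm_mul, Complex.norm_exp, Complex.norm_real, Real.norm_eq_abs]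
    have h1 : (Complex.I * x / ε).re = 0 := by
      simp [Complex.div_re, Complex.mul_re]
    rw [h1, Real.exp_zero, one_mul, abs_of_pos]
    positivity
  -- bound on Icc
  set B : ℝ := ε ^ (-(N:ℝ)) * Real.exp ((N:ℝ) ^ 2) with hB
  have hB0 : 0 ≤ B := by positivity
  have hgB : ∀ x ∈ Set.Icc (-(N:ℝ)) (N:ℝ), g x ≤ B := by
    intro x hx
    show ‖_‖ * _ ≤ B
    rw [hnorm]
    have h1 : ε ^ (-x) ≤ ε ^ (-(N:ℝ)) :=
      Real.rpow_le_rpow_of_exponent_ge hε0 hε1 (by linarith [hx.2])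
    have h2 : Real.exp (x ^ 2) ≤ Real.exp ((N:ℝ) ^ 2) := by
      apply Real.exp_le_exp.mpr
      have : |x| ≤ (N:ℝ) := abs_le.mpr ⟨hx.1, hx.2⟩
      nlinarith [abs_nonneg x, sq_abs x]
    have h3 : (1 + |x|) ^ (-(N:ℝ)) ≤ 1 :=
      Real.rpow_le_one_of_one_le_of_nonpos (by linarith [abs_nonneg x]) (by simp)
    calc ε ^ (-x) * Real.exp (x ^ 2) * (1 + |x|) ^ (-(N:ℝ))
        ≤ ε ^ (-x) * Real.exp (x ^ 2) * 1 := by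
          apply mul_le_mul_of_nonneg_left h3; positivity
      _ = ε ^ (-x) * Real.exp (x ^ 2) := mul_one _
      _ ≤ B := by rw [hB]; exact mul_le_mul h1 h2 (Real.exp_pos _).le (by positivity)
  have hbdd : BddAbove (Set.range fun x => ⨆ _ : x ∈ Set.Icc (-(N:ℝ)) (N:ℝ), g x) := by
    refine ⟨B, ?_⟩
    rintro y ⟨x, rfl⟩
    by_cases hx : x ∈ Set.Icc (-(N:ℝ)) (N:ℝ)
    · dsimp only; rw [ciSup_pos hx]; exact hgB x hx
    · dsimp only
      haveI : IsEmpty (x ∈ Set.Icc (-(N:ℝ)) (N:ℝ)) := ⟨hx⟩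
      rw [Real.iSup_of_isEmpty]
      exact hB0
  have hmem : (N:ℝ) ∈ Set.Icc (-(N:ℝ)) (N:ℝ) := by
    exact ⟨by linarith [Nat.cast_nonneg (α := ℝ) N], le_refl _⟩
  have key : ε ^ (-(N:ℝ)) ≤ g (N:ℝ) := by
    show _ ≤ ‖_‖ * _
    rw [hnorm]
    have habs : |(N:ℝ)| = (N:ℝ) := abs_of_nonneg (Nat.cast_nonneg N)
    rw [habs]
    have h1 : ((1:ℝ) + N) ^ ((N:ℝ)) ≤ Real.exp ((N:ℝ)^2) := by
      rw [Real.rpow_natCast]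
      calc ((1:ℝ) + N) ^ N ≤ (Real.exp N) ^ N := by
            apply pow_le_pow_left₀ (by positivity)
            linarith [Real.add_one_le_exp (N:ℝ)]
        _ = Real.exp ((N:ℝ)^2) := by
            rw [← Real.exp_nat_mul]; ring_nf
    have h2 : (1:ℝ) ≤ Real.exp ((N:ℝ)^2) * (1 + (N:ℝ)) ^ (-(N:ℝ)) := by
      rw [Real.rpow_neg (by positivity), ← div_eq_mul_inv, le_div_iff₀ (by positivity), one_mul]
      exact h1
    calc ε ^ (-(N:ℝ)) = ε ^ (-(N:ℝ)) * 1 := (mul_one _).symm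
      _ ≤ ε ^ (-(N:ℝ)) * (Real.exp ((N:ℝ)^2) * (1 + (N:ℝ)) ^ (-(N:ℝ))) := by
          apply mul_le_mul_of_nonneg_left h2; positivity
      _ = ε ^ (-(N:ℝ)) * Real.exp ((N:ℝ)^2) * (1 + (N:ℝ)) ^ (-(N:ℝ)) := by ring
  show ε ^ (-(N:ℝ)) ≤ ⨆ x ∈ Set.Icc (-(N:ℝ)) (N:ℝ), g x
  refine key.trans ?_
  have h4 : g (N:ℝ) = ⨆ _ : (N:ℝ) ∈ Set.Icc (-(N:ℝ)) (N:ℝ), g (N:ℝ) :=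
    (ciSup_pos (f := fun _ => g (N:ℝ)) hmem).symm
  rw [h4]
  exact le_ciSup hbdd (N:ℝ)

lemma part1_aux (φ : ℝ → ℝ) (hφ : ContDiff ℝ (⊤ : ℕ∞) φ) (hsupp : HasCompactSupport φ) (m : ℕ) :
    ∃ C : ℝ, ∃ ε₀ : ℝ, 0 < ε₀ ∧ ∀ ε ∈ Set.Ioc (0:ℝ) 1, ε ≤ ε₀ →
      ‖∫ x : ℝ, (Complex.exp (Complex.I * x / ε) *
        ((ε ^ (-x) * Real.exp (x ^ 2) : ℝ) : ℂ)) * (φ x : ℂ)‖ ≤ C * ε ^ m := by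
  have hφ' : ContDiff ℝ ((⊤ : ℕ∞) : WithTop ℕ∞) φ := hφ.of_le (by simp)
  set ψ : ℝ → ℂ := fun x => ((Real.exp (x ^ 2) * φ x : ℝ) : ℂ) with hψdef
  have hre : ContDiff ℝ ((⊤ : ℕ∞) : WithTop ℕ∞) (fun x : ℝ => Real.exp (x ^ 2) * φ x) :=
    (Real.contDiff_exp.comp (contDiff_id.pow 2)).mul hφ'
  have hψ : ContDiff ℝ ((⊤ : ℕ∞) : WithTop ℕ∞) ψ :=
    Complex.ofRealCLM.contDiff.comp hre
  have hψs : HasCompactSupport ψ := by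
    have h1 : HasCompactSupport (fun x : ℝ => Real.exp (x ^ 2) * φ x) := hsupp.mul_left
    exact h1.comp_left (g := fun r : ℝ => (r : ℂ)) (by simp)
  -- support radius
  obtain ⟨r, hr⟩ := (hsupp.isBounded).subset_closedBall 0
  set n : ℕ := ⌈r⌉₊ with hn
  have hrn : r ≤ (n : ℝ) := Nat.le_ceil r
  have hsub : tsupport ψ ⊆ Set.Icc (-(n:ℝ)) (n:ℝ) := by
    have h2 : tsupport ψ ⊆ tsupport φ := by
      apply closure_minimal _ (isClosed_closure)
      intro x hx
      simp only [hψdef, Function.mem_support, ne_eq] at hx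
      apply subset_closure
      simp only [Function.mem_support, ne_eq]
      intro h0
      exact hx (by simp [h0])
    refine h2.trans (hr.trans ?_)
    rw [Real.closedBall_eq_Icc]
    apply Set.Icc_subset_Icc <;> simp <;> linarith
  set k : ℕ := m + n with hk
  -- bound on the k-th derivative
  obtain ⟨M, hM⟩ := (hcs_iter ψ hψs k).exists_bound_of_continuous
    ((hψ.iterate_deriv k).continuous)
  have hM0 : 0 ≤ M := le_trans (norm_nonneg _) (hM 0)
  refine ⟨M * (2 * n), 1, one_pos, ?_⟩
  rintro ε ⟨hε0, hε1⟩ _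
  set l : ℂ := Complex.I / ε - (Real.log ε : ℂ) with hl
  have hlim : l.im = ε⁻¹ := by
    simp [hl, Complex.div_im, Complex.ofReal_inv]
  have hlne : l ≠ 0 := by
    intro h
    rw [h] at hlim
    simp at hlim
    exact absurd hlim.symm hε0.ne'
  have hlnorm : ε⁻¹ ≤ ‖l‖ := by
    calc ε⁻¹ = |l.im| := by rw [hlim]; exact (abs_of_pos (inv_pos.mpr hε0)).symm
      _ ≤ ‖l‖ := Complex.abs_im_le_norm l
  have hinv : ‖1/l‖ ≤ ε := by
    rw [norm_div, norm_one, div_le_iff₀ (lt_of_lt_of_le (inv_pos.mpr hε0) hlnorm)]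
    calc (1:ℝ) = ε * ε⁻¹ := (mul_inv_cancel₀ hε0.ne').symm
      _ ≤ ε * ‖l‖ := by apply mul_le_mul_of_nonneg_left hlnorm hε0.le
  -- rewrite the integrand
  have hfun : ∀ x : ℝ, (Complex.exp (Complex.I * x / ε) *
      ((ε ^ (-x) * Real.exp (x ^ 2) : ℝ) : ℂ)) * (φ x : ℂ) = Complex.exp (l * x) * ψ x := by
    intro x
    have h1 : l * x = Complex.I * x / ε + (-(Real.log ε * x) : ℝ) := by
      push_cast [hl]; ring
    rw [h1, Complex.exp_add, ← Complex.ofReal_exp]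
    have h2 : Real.exp (-(Real.log ε * x)) = ε ^ (-x) := by
      rw [Real.rpow_def_of_pos hε0]; ring_nf
    rw [h2]
    show _ = _ * ((Real.exp (x ^ 2) * φ x : ℝ) : ℂ)
    push_cast
    ring
  rw [integral_congr_ae (Filter.Eventually.of_forall hfun)]
  rw [ibp_iter l hlne k ψ hψ hψs]
  rw [norm_mul, norm_pow, norm_neg]
  -- bound the remaining integral
  have hsub2 : ∀ x : ℝ, x ∉ Set.Icc (-(n:ℝ)) (n:ℝ) → Complex.exp (l * x) * (deriv^[k] ψ) x = 0 := by
    intro x hx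
    have : (deriv^[k] ψ) x = 0 := by
      by_contra h
      exact hx (hsub (tsupp_iter ψ k (subset_closure h)))
    rw [this, mul_zero]
  have hset : ∫ x : ℝ, Complex.exp (l * x) * (deriv^[k] ψ) x
      = ∫ x in Set.Icc (-(n:ℝ)) (n:ℝ), Complex.exp (l * x) * (deriv^[k] ψ) x := by
    rw [← integral_indicator measurableSet_Icc]
    congr 1
    funext x
    by_cases hx : x ∈ Set.Icc (-(n:ℝ)) (n:ℝ)
    · rw [Set.indicator_of_mem hx]
    · rw [Set.indicator_of_notMem hx, hsub2 x hx]
  have hnormexp : ∀ x ∈ Set.Icc (-(n:ℝ)) (n:ℝ),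
      ‖Complex.exp (l * x) * (deriv^[k] ψ) x‖ ≤ (ε ^ n)⁻¹ * M := by
    intro x hx
    rw [norm_mul]
    have h3 : ‖Complex.exp (l * x)‖ ≤ (ε ^ n)⁻¹ := by
      rw [Complex.norm_exp]
      have h4 : (l * x).re = -(Real.log ε) * x := by
        simp [hl, Complex.mul_re, Complex.div_re]
      rw [h4]
      have h5 : -(Real.log ε) * x ≤ -(Real.log ε) * n := by
        apply mul_le_mul_of_nonneg_left hx.2
        simp only [neg_nonneg]
        exact Real.log_nonpos hε0.le hε1
      calc Real.exp (-(Real.log ε) * x) ≤ Real.exp (-(Real.log ε) * n) := Real.exp_le_exp.mpr h5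
        _ = (ε ^ n)⁻¹ := by
          rw [show -(Real.log ε) * n = -((n:ℝ) * Real.log ε) by ring, Real.exp_neg,
            Real.exp_nat_mul, Real.exp_log hε0]
    exact mul_le_mul h3 (hM x) (norm_nonneg _) (inv_nonneg.mpr (pow_nonneg hε0.le n))
  have hmeas : volume (Set.Icc (-(n:ℝ)) (n:ℝ)) < ⊤ := by
    rw [Real.volume_Icc]; exact ENNReal.ofReal_lt_top
  have hbound : ‖∫ x in Set.Icc (-(n:ℝ)) (n:ℝ), Complex.exp (l * x) * (deriv^[k] ψ) x‖
      ≤ (ε ^ n)⁻¹ * M * (volume (Set.Icc (-(n:ℝ)) (n:ℝ))).toReal := by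
    apply norm_setIntegral_le_of_norm_le_const hmeas hnormexp
  have hvol : (volume (Set.Icc (-(n:ℝ)) (n:ℝ))).toReal = 2 * n := by
    rw [Real.volume_Icc, ENNReal.toReal_ofReal (by linarith [Nat.cast_nonneg (α := ℝ) n])]
    ring
  calc ‖1/l‖ ^ k * ‖∫ x : ℝ, Complex.exp (l * x) * (deriv^[k] ψ) x‖
      ≤ ε ^ k * ((ε ^ n)⁻¹ * M * (2 * n)) := by
        apply mul_le_mul (pow_le_pow_left₀ (norm_nonneg _) hinv k)
          (by rw [hset]; exact hbound.trans (le_of_eq (by rw [hvol])))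
          (norm_nonneg _)
          (pow_nonneg hε0.le k)
    _ = M * (2 * n) * ε ^ m := by
        rw [hk, pow_add]
        field_simp

/-- The net `f_ε(x) = e^{ix/ε} ε^{-x} e^{x²}` is weakly negligible but has no
`ε`-moderate global polynomial growth bound. -/
theorem stmt13 :
    (∀ φ : ℝ → ℝ, ContDiff ℝ (⊤ : ℕ∞) φ → HasCompactSupport φ → ∀ m : ℕ,
      ∃ C : ℝ, ∃ ε₀ : ℝ, 0 < ε₀ ∧ ∀ ε ∈ Set.Ioc (0:ℝ) 1, ε ≤ ε₀ →
        ‖∫ x : ℝ, (Complex.exp (Complex.I * x / ε) *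
          ((ε ^ (-x) * Real.exp (x ^ 2) : ℝ) : ℂ)) * (φ x : ℂ)‖ ≤ C * ε ^ m) ∧
    ∀ N : ℕ, ∀ ε ∈ Set.Ioc (0:ℝ) 1,
      ε ^ (-(N:ℝ)) ≤ ⨆ x ∈ Set.Icc (-(N:ℝ)) (N:ℝ),
        ‖Complex.exp (Complex.I * x / ε) * ((ε ^ (-x) * Real.exp (x ^ 2) : ℝ) : ℂ)‖ *
          (1 + |x|) ^ (-(N:ℝ)) := by
  exact ⟨part1_aux, fun N ε hε => part2_aux N ε hε⟩
end
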